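/- arXiv:math/0102165 — 2 statements merged into one kernel-verified Lean document; each statement's English description precedes it below -/
import Mathlib

section
/- Let g = ∑_{n≥1} (1/n)·1_{[n,n+1)}. Then g ∈ L^∞_1(ℓ₂); for every integer k ≥ 1 and almost every x, ⟨g, T_k g⟩_1(x) = ∑_{n≥1} 1/(n(n+k)) = (1/k)∑_{n=1}^{k} 1/n; and the sequence ((1/k)∑_{n=1}^{k} 1/n)_{k≥1} is square-summable but not summable, so ∑_{k∈ℤ} |⟨g, T_k g⟩_1(x)| = ∞ for a.e. x. -/
open MeasureTheory Filter
open scoped NNReal ENNReal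

/-- The `1/b`-periodized square sum `∑_{k∈ℤ} |f(x - k/b)|²` (valued in `ℝ≥0∞`). -/
noncomputable def sqSumFn (b : ℝ) (f : ℝ → ℂ) (x : ℝ) : ENNReal :=
  ∑' k : ℤ, (‖f (x - k / b)‖₊ : ENNReal) ^ 2

/-- The squared norm of `L^∞_{1/b}(ℓ₂)`:
`‖f‖² = esssup_{x ∈ [0,1/b]} ∑_{k∈ℤ} |f(x - k/b)|²`. -/
noncomputable def linfSqNorm (b : ℝ) (f : ℝ → ℂ) : ENNReal :=
  essSup (sqSumFn b f) (volume.restrict (Set.Icc 0 (1 / b)))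

/-- Membership in `L^∞_{1/b}(ℓ₂)`: a measurable function with finite norm. -/
def MemLinfL2 (b : ℝ) (f : ℝ → ℂ) : Prop :=
  Measurable f ∧ linfSqNorm b f ≠ ⊤

/-- The `1/b`-inner product `⟨f,g⟩_{1/b}(x) = ∑_{k∈ℤ} f(x-k/b) conj(g(x-k/b))`. -/
noncomputable def braket (b : ℝ) (f g : ℝ → ℂ) (x : ℝ) : ℂ :=
  ∑' k : ℤ, f (x - k / b) * (starRingEnd ℂ) (g (x - k / b))

/-- The function `g = ∑_{n≥1} (1/n)·1_{[n,n+1)}`, i.e. `g x = 1/⌊x⌋` for `⌊x⌋ ≥ 1`. -/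
noncomputable def gEx : ℝ → ℂ := fun x => if 1 ≤ ⌊x⌋ then ((⌊x⌋ : ℂ))⁻¹ else 0

/-- `H k = (1/k) ∑_{n=1}^{k} 1/n`. -/
noncomputable def Hseq (k : ℕ) : ℝ :=
  (1 / (k : ℝ)) * ∑ n ∈ Finset.range k, (1 : ℝ) / ((n : ℝ) + 1)


lemma gEx_measurable : Measurable gEx := by
  have : gEx = (fun n : ℤ => if 1 ≤ n then ((n : ℂ))⁻¹ else 0) ∘ (fun x : ℝ => ⌊x⌋) := rfl
  rw [this]
  exact (measurable_from_top).comp Int.measurable_floor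

lemma gEx_sub_int (x : ℝ) (m : ℤ) :
    gEx (x - m) = if 1 ≤ ⌊x⌋ - m then (((⌊x⌋ - m : ℤ) : ℂ))⁻¹ else 0 := by
  simp [gEx, Int.floor_sub_intCast]

lemma sqSumFn_eval (x : ℝ) :
    sqSumFn 1 gEx x = ∑' n : ℕ, (‖(((n:ℂ) + 1))⁻¹‖₊ : ENNReal) ^ 2 := by
  unfold sqSumFn
  simp only [div_one]
  set F : ℤ → ENNReal := fun k => (‖gEx (x - k)‖₊ : ENNReal) ^ 2 with hF
  have : ∑' k : ℤ, (‖gEx (x - (k:ℝ))‖₊ : ENNReal) ^ 2 = ∑' k : ℤ, F k := by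
    simp [hF]
  rw [this]
  set i : ℕ → ℤ := fun n => ⌊x⌋ - (n + 1) with hi
  have hinj : Function.Injective i := by
    intro a b hab
    simp only [hi, sub_right_inj, add_left_inj] at hab
    exact_mod_cast hab
  have hsupp : Function.support F ⊆ Set.range i := by
    intro k hk
    simp only [Function.mem_support, hF] at hk
    have : gEx (x - k) ≠ 0 := by
      intro h; apply hk; simp [h]
    rw [gEx_sub_int] at this
    by_cases hc : 1 ≤ ⌊x⌋ - k
    · refine ⟨(⌊x⌋ - k - 1).toNat, ?_⟩
      simp only [hi]
      rw [Int.toNat_of_nonneg (by omega)]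
      omega
    · simp [hc] at this
  rw [← hinj.tsum_eq hsupp]
  congr 1
  funext n
  simp only [hF, gEx_sub_int, hi]
  rw [if_pos (by omega)]
  congr 2
  push_cast
  ring

lemma sqSum_ne_top : (∑' n : ℕ, (‖(((n:ℂ) + 1))⁻¹‖₊ : ENNReal) ^ 2) ≠ ⊤ := by
  have hval : ∀ n : ℕ, (‖(((n:ℂ) + 1))⁻¹‖₊ : ENNReal) ^ 2
      = ((((n:ℝ≥0) + 1)⁻¹ ^ 2 : ℝ≥0) : ENNReal) := by
    intro n
    have : ((n:ℂ) + 1) = ((n+1 : ℕ) : ℂ) := by push_cast; ring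
    rw [this, nnnorm_inv, RCLike.nnnorm_natCast]
    push_cast
    ring
  simp only [hval]
  rw [ENNReal.tsum_coe_ne_top_iff_summable]
  rw [← NNReal.summable_coe]
  have : ∀ n : ℕ, ((((((n:ℝ≥0) + 1)⁻¹ ^ 2 : ℝ≥0)) : ℝ)) = 1 / (((n:ℝ)+1) ^ 2) := by
    intro n; push_cast; rw [inv_pow]; congr 1; ring
  simp only [this]
  have := (summable_nat_add_iff 1).mpr (Real.summable_one_div_nat_pow.mpr (by norm_num : 1 < 2))
  refine this.congr fun n => ?_
  push_cast
  ring


lemma hasSum_aux (k : ℕ) (hk : 1 ≤ k) :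
    HasSum (fun n : ℕ => (1 : ℝ) / (((n : ℝ) + 1) * ((n : ℝ) + 1 + (k : ℝ)))) (Hseq k) := by
  set a : ℕ → ℝ := fun n => 1 / ((n : ℝ) + 1) with ha
  have hk0 : (0:ℝ) < k := by exact_mod_cast hk
  have key : HasSum (fun n : ℕ => a n - a (n + k)) (∑ n ∈ Finset.range k, a n) := by
    rw [hasSum_iff_tendsto_nat_of_nonneg]
    · have heq : ∀ N : ℕ, ∑ n ∈ Finset.range N, (a n - a (n + k))
          = ∑ n ∈ Finset.range k, a n - ∑ i ∈ Finset.range k, a (N + i) := by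
        intro N
        rw [Finset.sum_sub_distrib]
        have h1 : ∑ n ∈ Finset.range N, a (n + k) = ∑ n ∈ Finset.Ico k (N + k), a n := by
          rw [Finset.sum_Ico_eq_sum_range]
          simp [add_comm, Nat.add_sub_cancel]
        have h2 : ∑ i ∈ Finset.range k, a (N + i) = ∑ n ∈ Finset.Ico N (N + k), a n := by
          rw [Finset.sum_Ico_eq_sum_range]
          simp [Nat.add_sub_cancel_left]
        rw [h1, h2]
        have e1 : ∑ n ∈ Finset.range N, a n + ∑ n ∈ Finset.Ico N (N + k), a n
            = ∑ n ∈ Finset.range (N + k), a n := by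
          rw [Finset.range_eq_Ico, Finset.sum_Ico_consecutive]
          · rw [Finset.range_eq_Ico]
          · exact Nat.zero_le _
          · exact Nat.le_add_right _ _
        have e2 : ∑ n ∈ Finset.range k, a n + ∑ n ∈ Finset.Ico k (N + k), a n
            = ∑ n ∈ Finset.range (N + k), a n := by
          rw [Finset.range_eq_Ico, Finset.sum_Ico_consecutive]
          · rw [Finset.range_eq_Ico]
          · exact Nat.zero_le _
          · exact Nat.le_add_left _ _
        linarith
      simp only [heq]
      have : Tendsto (fun N : ℕ => ∑ i ∈ Finset.range k, a (N + i)) atTop (nhds 0) := by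
        have : Tendsto (fun N : ℕ => ∑ i ∈ Finset.range k, a (N + i)) atTop
            (nhds (∑ i ∈ Finset.range k, (0:ℝ))) := by
          refine tendsto_finset_sum _ fun i _ => ?_
          have : Tendsto (fun N : ℕ => ((N : ℝ) + (i:ℝ) + 1)⁻¹) atTop (nhds 0) := by
            apply Tendsto.comp tendsto_inv_atTop_zero
            apply tendsto_atTop_add_const_right
            apply tendsto_atTop_add_const_right
            exact tendsto_natCast_atTop_atTop
          simpa [ha, one_div, add_comm, add_assoc, add_left_comm] using this
        simpa using this
      simpa using Tendsto.sub tendsto_const_nhds this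
    · intro n
      have h1 : (0:ℝ) < (n:ℝ) + 1 := by positivity
      have h2 : a (n+k) ≤ a n := by
        simp only [ha, one_div]
        apply inv_anti₀ h1
        push_cast; linarith [Nat.cast_nonneg (α := ℝ) k]
      linarith
  have hterm : ∀ n : ℕ, (1 : ℝ) / (((n : ℝ) + 1) * ((n : ℝ) + 1 + (k : ℝ)))
      = (1/(k:ℝ)) * (a n - a (n + k)) := by
    intro n
    have h1 : ((n:ℝ) + 1) ≠ 0 := by positivity
    have h2 : ((n:ℝ) + 1 + (k:ℝ)) ≠ 0 := by positivity
    simp only [ha]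
    push_cast
    rw [div_sub_div _ _ h1 (by positivity : ((n:ℝ) + (k:ℝ) + 1) ≠ 0)]
    field_simp
    ring
  simp only [hterm]
  exact key.mul_left _

lemma braket_eval (k : ℕ) (hk : 1 ≤ k) (x : ℝ) :
    braket 1 gEx (fun y => gEx (y - (k : ℝ))) x = ((Hseq k : ℝ) : ℂ) := by
  unfold braket
  simp only [div_one]
  set F : ℤ → ℂ := fun j =>
    gEx (x - j) * (starRingEnd ℂ) (gEx (x - j - k)) with hF
  have hre : ∀ j : ℤ, gEx (x - (j:ℝ)) * (starRingEnd ℂ) (gEx (x - (j:ℝ) - (k:ℝ))) = F j := by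
    intro j; rfl
  rw [tsum_congr hre]
  set i : ℕ → ℤ := fun n => ⌊x⌋ - k - (n + 1) with hi
  have hinj : Function.Injective i := by
    intro a b hab
    simp only [hi, sub_right_inj, add_left_inj] at hab
    exact_mod_cast hab
  have hxk : ∀ j : ℤ, x - (j:ℝ) - (k:ℝ) = x - ((j + k : ℤ) : ℝ) := by
    intro j; push_cast; ring
  have hsupp : Function.support F ⊆ Set.range i := by
    intro j hj
    simp only [Function.mem_support, hF] at hj
    have h2 : gEx (x - j - k) ≠ 0 := by
      intro h; apply hj; simp [h]
    rw [hxk, gEx_sub_int] at h2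
    by_cases hc : 1 ≤ ⌊x⌋ - (j + k)
    · refine ⟨(⌊x⌋ - k - j - 1).toNat, ?_⟩
      simp only [hi]
      rw [Int.toNat_of_nonneg (by omega)]
      omega
    · simp [hc] at h2
  rw [← hinj.tsum_eq hsupp]
  have hterm : ∀ n : ℕ, F (i n)
      = ((1 / (((n:ℝ) + 1) * ((n:ℝ) + 1 + (k:ℝ))) : ℝ) : ℂ) := by
    intro n
    have e1 : gEx (x - (i n : ℝ)) = (((k + n + 1 : ℤ) : ℂ))⁻¹ := by
      rw [gEx_sub_int, if_pos (by simp only [hi]; omega)]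
      congr 2
      simp only [hi]; ring
    have e2 : gEx (x - (i n : ℝ) - (k:ℝ)) = (((n + 1 : ℤ) : ℂ))⁻¹ := by
      rw [hxk, gEx_sub_int, if_pos (by simp only [hi]; omega)]
      congr 2
      simp only [hi]; ring
    simp only [hF, e1, e2, map_inv₀]
    push_cast
    simp only [map_add, map_one, Complex.conj_natCast]
    have h1 : ((n:ℂ) + 1) ≠ 0 := by
      have : ((n:ℂ) + 1) = ((n+1:ℕ) : ℂ) := by push_cast; ring
      rw [this]; exact Nat.cast_ne_zero.mpr (Nat.succ_ne_zero n)
    have h2 : ((k:ℂ) + (n:ℂ) + 1) ≠ 0 := by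
      have : ((k:ℂ) + (n:ℂ) + 1) = ((k+n+1:ℕ) : ℂ) := by push_cast; ring
      rw [this]; exact Nat.cast_ne_zero.mpr (by omega)
    rw [one_div, mul_inv]
    ring
  rw [tsum_congr hterm]
  exact (Complex.hasSum_ofReal.mpr (hasSum_aux k hk)).tsum_eq


lemma Hseq_nonneg (k : ℕ) : 0 ≤ Hseq k := by
  unfold Hseq
  apply mul_nonneg
  · positivity
  · apply Finset.sum_nonneg; intro i _; positivity

lemma Hseq_le (k : ℕ) (hk : 1 ≤ k) : Hseq k ≤ (1 + Real.log k) / k := by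
  unfold Hseq
  rw [one_div, div_eq_inv_mul]
  apply mul_le_mul_of_nonneg_left _ (by positivity)
  have h1 : (harmonic k : ℝ) = ∑ n ∈ Finset.range k, (1 : ℝ) / ((n : ℝ) + 1) := by
    unfold harmonic
    push_cast
    simp [one_div]
  rw [← h1]
  exact harmonic_le_one_add_log k

lemma Hseq_ge (k : ℕ) (hk : 1 ≤ k) : ((k : ℝ))⁻¹ ≤ Hseq k := by
  unfold Hseq
  rw [one_div]
  have hk0 : (0:ℝ) < k := by exact_mod_cast hk
  have : (1:ℝ) ≤ ∑ n ∈ Finset.range k, (1 : ℝ) / ((n : ℝ) + 1) := by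
    have := Finset.single_le_sum (f := fun n : ℕ => (1 : ℝ) / ((n : ℝ) + 1))
      (fun i _ => by positivity) (Finset.mem_range.mpr hk)
    simpa using this
  nlinarith [inv_pos.mpr hk0]

lemma log_sq_bound (m : ℝ) (hm : 1 ≤ m) : (1 + Real.log m) ^ 2 ≤ 25 * m ^ ((2:ℝ))⁻¹ := by
  have hm0 : (0:ℝ) < m := by linarith
  set y := m ^ ((4:ℝ))⁻¹ with hy
  have hy1 : 1 ≤ y := Real.one_le_rpow hm (by norm_num)
  have hlog : Real.log m = 4 * Real.log y := by
    rw [hy, Real.log_rpow hm0]; ring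
  have hlogy : Real.log y ≤ y - 1 := Real.log_le_sub_one_of_pos (by linarith)
  have h1 : 1 + Real.log m ≤ 5 * y := by
    rw [hlog]; nlinarith
  have h2 : (0:ℝ) ≤ 1 + Real.log m := by
    have : 0 ≤ Real.log m := Real.log_nonneg hm
    linarith
  have h3 : (1 + Real.log m)^2 ≤ (5*y)^2 := by nlinarith
  have h4 : y^2 = m ^ ((2:ℝ))⁻¹ := by
    rw [hy, ← Real.rpow_natCast (m ^ ((4:ℝ))⁻¹) 2, ← Real.rpow_mul (le_of_lt hm0)]
    norm_num
  nlinarith [h4]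

lemma summable_sq : Summable (fun k : ℕ => (Hseq (k + 1)) ^ 2) := by
  have hbound : ∀ k : ℕ, (Hseq (k + 1)) ^ 2 ≤ 25 * ((((k+1:ℕ)):ℝ) ^ ((3:ℝ)/2))⁻¹ := by
    intro k
    set m : ℝ := ((k+1:ℕ):ℝ) with hm
    have hm1 : 1 ≤ m := by rw [hm]; exact_mod_cast Nat.succ_le_succ (Nat.zero_le k)
    have hm0 : (0:ℝ) < m := by linarith
    have h1 : Hseq (k+1) ≤ (1 + Real.log m) / m := Hseq_le (k+1) (by omega)
    have h2 : (Hseq (k+1))^2 ≤ ((1 + Real.log m) / m)^2 := by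
      have := Hseq_nonneg (k+1)
      nlinarith
    have h3 : ((1 + Real.log m) / m)^2 = (1 + Real.log m)^2 / m^2 := by ring
    have h4 : (1 + Real.log m)^2 / m^2 ≤ 25 * m ^ ((2:ℝ))⁻¹ / m^2 :=
      (div_le_div_iff_of_pos_right (by positivity : (0:ℝ) < m^2)).mpr (log_sq_bound m hm1)
    have h5 : 25 * m ^ ((2:ℝ))⁻¹ / m^2 = 25 * (m ^ ((3:ℝ)/2))⁻¹ := by
      rw [← Real.rpow_natCast m 2, ← Real.rpow_neg (le_of_lt hm0), div_eq_mul_inv,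
        mul_assoc, ← Real.rpow_neg (le_of_lt hm0), ← Real.rpow_add hm0]
      norm_num
    calc (Hseq (k+1))^2 ≤ ((1 + Real.log m) / m)^2 := h2
      _ = (1 + Real.log m)^2 / m^2 := h3
      _ ≤ 25 * m ^ ((2:ℝ))⁻¹ / m^2 := h4
      _ = 25 * (m ^ ((3:ℝ)/2))⁻¹ := h5
  have hsum : Summable (fun k : ℕ => 25 * ((((k+1:ℕ)):ℝ) ^ ((3:ℝ)/2))⁻¹) := by
    apply Summable.mul_left
    have := (Real.summable_nat_rpow_inv (p := (3:ℝ)/2)).mpr (by norm_num)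
    exact (summable_nat_add_iff 1).mpr this
  exact Summable.of_nonneg_of_le (fun k => sq_nonneg _) hbound hsum

lemma not_summable_H : ¬ Summable (fun k : ℕ => Hseq (k + 1)) := by
  intro h
  have hcomp : Summable (fun k : ℕ => (((k+1:ℕ)):ℝ)⁻¹) := by
    apply Summable.of_nonneg_of_le (fun k => by positivity) (fun k => Hseq_ge (k+1) (by omega)) h
  have : Summable (fun k : ℕ => ((k:ℕ):ℝ)⁻¹) := (summable_nat_add_iff 1).mp (by exact_mod_cast hcomp)
  exact Real.not_summable_natCast_inv this


lemma tsum_braket_top (x : ℝ) :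
    (∑' k : ℤ, (‖braket 1 gEx (fun y => gEx (y - (k : ℝ))) x‖₊ : ENNReal)) = ⊤ := by
  rw [← top_le_iff]
  have hinj : Function.Injective (fun n : ℕ => ((n : ℤ) + 1)) := by
    intro a b hab
    simpa using hab
  have hle := ENNReal.tsum_comp_le_tsum_of_injective hinj
    (fun k : ℤ => (‖braket 1 gEx (fun y => gEx (y - (k : ℝ))) x‖₊ : ENNReal))
  refine le_trans ?_ hle
  have hval : ∀ n : ℕ,
      (‖braket 1 gEx (fun y => gEx (y - ((((n:ℤ) + 1) : ℤ) : ℝ))) x‖₊ : ENNReal)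
        = (‖((Hseq (n+1) : ℝ) : ℂ)‖₊ : ENNReal) := by
    intro n
    have hcast : ((((n:ℤ) + 1) : ℤ) : ℝ) = (((n+1:ℕ)) : ℝ) := by push_cast; ring
    rw [hcast, braket_eval (n+1) (by omega) x]
  rw [show (fun n : ℕ => (‖braket 1 gEx (fun y => gEx (y - ((((n:ℤ) + 1) : ℤ) : ℝ))) x‖₊
      : ENNReal)) = fun n : ℕ => (‖((Hseq (n+1) : ℝ) : ℂ)‖₊ : ENNReal) from funext hval]
  rw [top_le_iff]
  by_contra h
  have hs : Summable (fun n : ℕ => ‖((Hseq (n+1) : ℝ) : ℂ)‖₊) :=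
    ENNReal.tsum_coe_ne_top_iff_summable.mp h
  have hr : Summable (fun n : ℕ => ((‖((Hseq (n+1) : ℝ) : ℂ)‖₊ : ℝ))) :=
    NNReal.summable_coe.mpr hs
  apply not_summable_H
  refine hr.congr fun n => ?_
  simp [coe_nnnorm, Complex.norm_real, abs_of_nonneg (Hseq_nonneg (n+1))]

/-- `gEx ∈ L^∞_1(ℓ₂)`; for every `k ≥ 1`,
`∑_{n≥1} 1/(n(n+k)) = (1/k)∑_{n=1}^k 1/n` and a.e.
`⟨gEx, T_k gEx⟩₁(x) = (1/k)∑_{n=1}^k 1/n`; the sequence `((1/k)∑_{n=1}^k 1/n)_k`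
is square-summable but not summable; and `∑_{k∈ℤ} |⟨gEx, T_k gEx⟩₁(x)| = ∞` a.e. -/
theorem gEx_in_linfL2_not_in_XZ :
    MemLinfL2 1 gEx ∧
    (∀ k : ℕ, 1 ≤ k →
      (∑' n : ℕ, (1 : ℝ) / (((n : ℝ) + 1) * ((n : ℝ) + 1 + (k : ℝ)))) = Hseq k) ∧
    (∀ k : ℕ, 1 ≤ k →
      ∀ᵐ x : ℝ, braket 1 gEx (fun y => gEx (y - (k : ℝ))) x = ((Hseq k : ℝ) : ℂ)) ∧
    Summable (fun k : ℕ => (Hseq (k + 1)) ^ 2) ∧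
    ¬ Summable (fun k : ℕ => Hseq (k + 1)) ∧
    (∀ᵐ x : ℝ, (∑' k : ℤ, (‖braket 1 gEx (fun y => gEx (y - (k : ℝ))) x‖₊ : ENNReal)) = ⊤) := by
  refine ⟨⟨gEx_measurable, ?_⟩, fun k hk => (hasSum_aux k hk).tsum_eq,
    fun k hk => Filter.Eventually.of_forall (braket_eval k hk),
    summable_sq, not_summable_H, Filter.Eventually.of_forall tsum_braket_top⟩
  have hle : linfSqNorm 1 gEx ≤ ∑' n : ℕ, (‖(((n:ℂ) + 1))⁻¹‖₊ : ENNReal) ^ 2 :=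
    essSup_le_of_ae_le _ (Filter.Eventually.of_forall fun x => le_of_eq (sqSumFn_eval x))
  exact ne_top_of_le_ne_top sqSum_ne_top hle
end

section
/- For every g ∈ L^∞_1(ℓ₂), the windowed Zak transform V¹_g(f)(t,v,x) := Z(f·T_x g)(t,v) e^{−2πitv} is a bounded operator from L^∞_1(ℓ₂) to L^∞([0,1]²×ℝ): for every f ∈ L^∞_1(ℓ₂) and every x ∈ ℝ, esssup_{(t,v)∈[0,1]²} |Z(f·T_x g)(t,v)| ≤ ‖f‖_{L^∞_1(ℓ₂)} · ‖g‖_{L^∞_1(ℓ₂)}. -/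
open MeasureTheory Filter

/-- The Zak transform `Z(f)(t,v) = ∑_{k∈ℤ} f(t+k) e^{-2πikv}` (pointwise `tsum`). -/
noncomputable def Zak (f : ℝ → ℂ) (t v : ℝ) : ℂ :=
  ∑' k : ℤ, f (t + (k : ℝ)) *
    Complex.exp ((-2 : ℂ) * (Real.pi : ℂ) * Complex.I * (k : ℂ) * (v : ℂ))

/-- The Zak-space norm `‖f‖_{X_Z} = esssup_{(t,v) ∈ [0,1]²} |Z(f)(t,v)|`. -/
noncomputable def XZNorm (f : ℝ → ℂ) : ENNReal :=
  essSup (fun p : ℝ × ℝ => (‖Zak f p.1 p.2‖₊ : ENNReal))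
    ((volume.prod volume).restrict (Set.Icc 0 1 ×ˢ Set.Icc 0 1))

/- ### Auxiliary lemmas -/

lemma tsum_cs (a b : ℤ → ENNReal) :
    (∑' k, a k * b k) ^ 2 ≤ (∑' k, a k ^ 2) * (∑' k, b k ^ 2) := by
  have hpq : (2:ℝ).HolderConjugate 2 := by constructor <;> norm_num
  have h := ENNReal.lintegral_mul_le_Lp_mul_Lq (Measure.count : Measure ℤ)
    hpq (f := a) (g := b) (measurable_of_countable a).aemeasurable
    (measurable_of_countable b).aemeasurable
  simp only [lintegral_count, Pi.mul_apply, ENNReal.rpow_two] at h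
  have key : ∀ X : ENNReal, (X ^ ((1:ℝ)/2)) ^ (2:ℕ) = X := fun X => by
    rw [← ENNReal.rpow_natCast, ← ENNReal.rpow_mul]; norm_num
  calc (∑' k, a k * b k) ^ 2
      ≤ ((∑' k, a k ^ 2) ^ ((1:ℝ)/2) * (∑' k, b k ^ 2) ^ ((1:ℝ)/2)) ^ 2 :=
        pow_le_pow_left' h 2
    _ = (∑' k, a k ^ 2) * (∑' k, b k ^ 2) := by rw [mul_pow, key, key]

lemma nnnorm_term (h : ℝ → ℂ) (t v : ℝ) (k : ℤ) :
    ‖h (t + (k:ℝ)) * Complex.exp ((-2 : ℂ) * (Real.pi : ℂ) * Complex.I * (k : ℂ) * (v : ℂ))‖₊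
      = ‖h (t + (k:ℝ))‖₊ := by
  rw [nnnorm_mul]
  have he : ‖Complex.exp ((-2 : ℂ) * (Real.pi : ℂ) * Complex.I * (k : ℂ) * (v : ℂ))‖₊ = 1 := by
    ext
    rw [coe_nnnorm, Complex.norm_exp]
    have : ((-2 : ℂ) * (Real.pi : ℂ) * Complex.I * (k : ℂ) * (v : ℂ)).re = 0 := by simp
    simp [this]
  rw [he, mul_one]

lemma zak_le (h : ℝ → ℂ) (t v : ℝ) :
    (‖Zak h t v‖₊ : ENNReal) ≤ ∑' k : ℤ, (‖h (t + (k:ℝ))‖₊ : ENNReal) := by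
  by_cases hs : (∑' k : ℤ, (‖h (t + (k:ℝ))‖₊ : ENNReal)) = ⊤
  · simp [hs]
  · have hsum : Summable fun k : ℤ => ‖h (t + (k:ℝ))‖₊ :=
      ENNReal.tsum_coe_ne_top_iff_summable.1 hs
    have hsum' : Summable fun k : ℤ =>
        ‖h (t + (k:ℝ)) * Complex.exp ((-2 : ℂ) * (Real.pi : ℂ) * Complex.I * (k : ℂ) * (v : ℂ))‖₊ := by
      simpa only [nnnorm_term] using hsum
    have h1 : ‖Zak h t v‖₊ ≤ ∑' k : ℤ,
        ‖h (t + (k:ℝ)) * Complex.exp ((-2 : ℂ) * (Real.pi : ℂ) * Complex.I * (k : ℂ) * (v : ℂ))‖₊ :=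
      nnnorm_tsum_le hsum'
    calc (‖Zak h t v‖₊ : ENNReal)
        ≤ ((∑' k : ℤ, ‖h (t + (k:ℝ)) * Complex.exp ((-2 : ℂ) * (Real.pi : ℂ) * Complex.I * (k : ℂ) * (v : ℂ))‖₊ : NNReal) : ENNReal) :=
          ENNReal.coe_le_coe.2 h1
      _ = ∑' k : ℤ, (‖h (t + (k:ℝ))‖₊ : ENNReal) := by
          rw [ENNReal.coe_tsum hsum']
          exact tsum_congr fun k => by rw [nnnorm_term]

lemma sqSumFn_one_eq (f : ℝ → ℂ) (t : ℝ) :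
    sqSumFn 1 f t = ∑' k : ℤ, (‖f (t - k)‖₊ : ENNReal) ^ 2 := by
  unfold sqSumFn; simp

lemma sqSumFn_periodic (f : ℝ → ℂ) (t : ℝ) (n : ℤ) :
    sqSumFn 1 f (t + n) = sqSumFn 1 f t := by
  rw [sqSumFn_one_eq, sqSumFn_one_eq]
  have := (Equiv.addRight n).tsum_eq (fun k : ℤ => (‖f (t + n - k)‖₊ : ENNReal) ^ 2)
  rw [← this]
  refine tsum_congr fun k => ?_
  have harg : t + (n:ℝ) - (((Equiv.addRight n) k : ℤ) : ℝ) = t - k := by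
    simp only [Equiv.coe_addRight]
    push_cast
    ring
  rw [harg]

lemma sqSumFn_as_plus (f : ℝ → ℂ) (t : ℝ) :
    sqSumFn 1 f t = ∑' k : ℤ, (‖f (t + k)‖₊ : ENNReal) ^ 2 := by
  rw [sqSumFn_one_eq]
  have := (Equiv.neg ℤ).tsum_eq (fun k : ℤ => (‖f (t + k)‖₊ : ENNReal) ^ 2)
  rw [← this]
  refine tsum_congr fun k => ?_
  simp [sub_eq_add_neg]

lemma sqSumFn_measurable (f : ℝ → ℂ) (hf : Measurable f) :
    Measurable (sqSumFn 1 f) := by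
  apply Measurable.ennreal_tsum
  intro k
  exact ((hf.comp (measurable_id.sub_const _)).nnnorm.coe_nnreal_ennreal).pow_const 2

/-- A measurable ℤ-periodic function is a.e. bounded by its essential sup over `[0,1]`. -/
lemma ae_le_essSup_of_periodic (F : ℝ → ENNReal) (hF : Measurable F)
    (hper : ∀ (t : ℝ) (n : ℤ), F (t + n) = F t) :
    ∀ᵐ t ∂(volume : Measure ℝ), F t ≤ essSup F (volume.restrict (Set.Icc 0 1)) := by
  set c := essSup F (volume.restrict (Set.Icc 0 1)) with hc
  have h1 : ∀ᵐ t ∂(volume.restrict (Set.Icc (0:ℝ) 1)), F t ≤ c := ENNReal.ae_le_essSup F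
  set B : Set ℝ := {t | ¬ F t ≤ c} with hB
  have hBmeas : MeasurableSet B := by
    have : B = {t | c < F t} := by ext t; simp [B, not_le]
    rw [this]; exact measurableSet_lt measurable_const hF
  have h2 : volume (B ∩ Set.Icc (0:ℝ) 1) = 0 := by
    have := ae_iff.1 h1
    rwa [Measure.restrict_apply hBmeas] at this
  have hBn : ∀ n : ℤ, volume (B ∩ Set.Icc (n:ℝ) (n+1)) = 0 := by
    intro n
    have hsub : B ∩ Set.Icc (n:ℝ) (n+1) ⊆ (fun t => t + (-n:ℝ)) ⁻¹' (B ∩ Set.Icc (0:ℝ) 1) := by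
      rintro t ⟨htB, ht1, ht2⟩
      have heq : F (t + (-n:ℝ)) = F t := by
        have h := hper (t + (-n:ℝ)) n
        rw [← h]; congr 1; ring
      simp only [Set.mem_preimage, Set.mem_inter_iff, Set.mem_Icc]
      refine ⟨?_, by linarith, by linarith⟩
      simp only [B, Set.mem_setOf_eq] at htB ⊢
      rw [heq]; exact htB
    have : volume ((fun t => t + (-n:ℝ)) ⁻¹' (B ∩ Set.Icc (0:ℝ) 1)) = 0 := by
      rw [measure_preimage_add_right]; exact h2
    exact measure_mono_null hsub this
  have hBnull : volume B = 0 := by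
    have hcover : B ⊆ ⋃ n : ℤ, B ∩ Set.Icc (n:ℝ) (n+1) := by
      intro t ht
      exact Set.mem_iUnion.2 ⟨⌊t⌋, ht, Int.floor_le t, (Int.lt_floor_add_one t).le⟩
    refine measure_mono_null hcover ?_
    exact measure_iUnion_null fun n => hBn n
  rw [ae_iff]
  exact hBnull

lemma essSup_sq_le {α : Type*} [MeasurableSpace α] (μ : Measure α) (F : α → ENNReal) :
    (essSup F μ) ^ 2 ≤ essSup (fun a => F a ^ 2) μ := by
  set c := essSup (fun a => F a ^ 2) μ with hc
  by_cases hctop : c = ⊤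
  · rw [hctop]; exact le_top
  · have h1 : ∀ᵐ a ∂μ, F a ^ 2 ≤ c := ENNReal.ae_le_essSup _
    have hkey : (c ^ ((1:ℝ)/2)) ^ (2:ℝ) = c := by
      rw [← ENNReal.rpow_mul]; norm_num
    have h2 : ∀ᵐ a ∂μ, F a ≤ c ^ ((1:ℝ)/2) := by
      refine h1.mono fun a ha => ?_
      refine (ENNReal.rpow_le_rpow_iff (z := 2) two_pos).1 ?_
      rw [hkey, ENNReal.rpow_two]
      exact ha
    have h3 : essSup F μ ≤ c ^ ((1:ℝ)/2) := essSup_le_of_ae_le _ h2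
    calc (essSup F μ) ^ 2 ≤ (c ^ ((1:ℝ)/2)) ^ 2 := pow_le_pow_left' h3 2
      _ = c := by rw [← ENNReal.rpow_two, hkey]

lemma ae_prod_fst {P : ℝ → Prop} (h : ∀ᵐ t ∂(volume : Measure ℝ), P t) :
    ∀ᵐ p : ℝ × ℝ ∂((volume : Measure ℝ).prod volume), P p.1 := by
  rw [ae_iff] at h ⊢
  have hset : {p : ℝ × ℝ | ¬ P p.1} = {t | ¬ P t} ×ˢ (Set.univ : Set ℝ) := by
    ext p; simp
  rw [hset, Measure.prod_prod, h, zero_mul]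

lemma zak_sq_le (f g : ℝ → ℂ) (x t v : ℝ) :
    (‖Zak (fun s => f s * g (s - x)) t v‖₊ : ENNReal) ^ 2
      ≤ sqSumFn 1 f t * sqSumFn 1 g (t - x) := by
  set h : ℝ → ℂ := fun s => f s * g (s - x) with hh
  have h1 : (‖Zak h t v‖₊ : ENNReal) ≤ ∑' k : ℤ, (‖h (t + (k:ℝ))‖₊ : ENNReal) := zak_le h t v
  have h2 : (∑' k : ℤ, (‖h (t + (k:ℝ))‖₊ : ENNReal))
      = ∑' k : ℤ, (‖f (t + (k:ℝ))‖₊ : ENNReal) * (‖g (t + (k:ℝ) - x)‖₊ : ENNReal) := by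
    refine tsum_congr fun k => ?_
    simp [h, nnnorm_mul]
  have h3 := tsum_cs (fun k : ℤ => (‖f (t + (k:ℝ))‖₊ : ENNReal))
    (fun k : ℤ => (‖g (t + (k:ℝ) - x)‖₊ : ENNReal))
  have h4 : (∑' k : ℤ, (‖f (t + (k:ℝ))‖₊ : ENNReal) ^ 2) = sqSumFn 1 f t :=
    (sqSumFn_as_plus f t).symm
  have h5 : (∑' k : ℤ, (‖g (t + (k:ℝ) - x)‖₊ : ENNReal) ^ 2) = sqSumFn 1 g (t - x) := by
    rw [sqSumFn_as_plus]
    refine tsum_congr fun k => ?_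
    rw [show t + (k:ℝ) - x = t - x + k by ring]
  calc (‖Zak h t v‖₊ : ENNReal) ^ 2
      ≤ (∑' k : ℤ, (‖f (t + (k:ℝ))‖₊ : ENNReal) * (‖g (t + (k:ℝ) - x)‖₊ : ENNReal)) ^ 2 := by
        rw [← h2]; exact pow_le_pow_left' h1 2
    _ ≤ (∑' k : ℤ, (‖f (t + (k:ℝ))‖₊ : ENNReal) ^ 2) *
          (∑' k : ℤ, (‖g (t + (k:ℝ) - x)‖₊ : ENNReal) ^ 2) := h3
    _ = sqSumFn 1 f t * sqSumFn 1 g (t - x) := by rw [h4, h5]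

/-- For `g ∈ L^∞_1(ℓ₂)`, the windowed Zak transform is bounded from `L^∞_1(ℓ₂)`
to `L^∞([0,1]² × ℝ)`: for every `f ∈ L^∞_1(ℓ₂)` and `x ∈ ℝ`,
`esssup_{(t,v)∈[0,1]²} |Z(f·T_x g)(t,v)| ≤ ‖f‖·‖g‖` (stated with both sides squared). -/
theorem windowed_zak_bounded (g : ℝ → ℂ) (hg : MemLinfL2 1 g)
    (f : ℝ → ℂ) (hf : MemLinfL2 1 f) (x : ℝ) :
    (XZNorm (fun t => f t * g (t - x))) ^ 2 ≤ linfSqNorm 1 f * linfSqNorm 1 g := by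
  obtain ⟨hfm, -⟩ := hf
  obtain ⟨hgm, -⟩ := hg
  have hnorm : ∀ h : ℝ → ℂ,
      linfSqNorm 1 h = essSup (sqSumFn 1 h) (volume.restrict (Set.Icc 0 1)) := by
    intro h; unfold linfSqNorm; norm_num
  have haef : ∀ᵐ t ∂(volume : Measure ℝ), sqSumFn 1 f t ≤ linfSqNorm 1 f := by
    rw [hnorm f]
    exact ae_le_essSup_of_periodic _ (sqSumFn_measurable f hfm) (sqSumFn_periodic f)
  have haeg : ∀ᵐ t ∂(volume : Measure ℝ), sqSumFn 1 g t ≤ linfSqNorm 1 g := by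
    rw [hnorm g]
    exact ae_le_essSup_of_periodic _ (sqSumFn_measurable g hgm) (sqSumFn_periodic g)
  have hmp : MeasurePreserving (fun t : ℝ => t + (-x)) volume volume :=
    measurePreserving_add_right volume (-x)
  have haeg' : ∀ᵐ t ∂(volume : Measure ℝ), sqSumFn 1 g (t - x) ≤ linfSqNorm 1 g := by
    have := hmp.quasiMeasurePreserving.ae haeg
    simpa [sub_eq_add_neg] using this
  have hae : ∀ᵐ t ∂(volume : Measure ℝ),
      sqSumFn 1 f t * sqSumFn 1 g (t - x) ≤ linfSqNorm 1 f * linfSqNorm 1 g :=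
    (haef.and haeg').mono fun t ⟨h1, h2⟩ => mul_le_mul' h1 h2
  have haeprod : ∀ᵐ p : ℝ × ℝ ∂((volume : Measure ℝ).prod volume),
      sqSumFn 1 f p.1 * sqSumFn 1 g (p.1 - x) ≤ linfSqNorm 1 f * linfSqNorm 1 g :=
    ae_prod_fst hae
  have haeres : ∀ᵐ p : ℝ × ℝ
      ∂(((volume : Measure ℝ).prod volume).restrict (Set.Icc 0 1 ×ˢ Set.Icc 0 1)),
      (‖Zak (fun t => f t * g (t - x)) p.1 p.2‖₊ : ENNReal) ^ 2
        ≤ linfSqNorm 1 f * linfSqNorm 1 g := by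
    refine (ae_restrict_of_ae haeprod).mono fun p hp => ?_
    exact le_trans (zak_sq_le f g x p.1 p.2) hp
  calc (XZNorm (fun t => f t * g (t - x))) ^ 2
      ≤ essSup (fun p : ℝ × ℝ => (‖Zak (fun t => f t * g (t - x)) p.1 p.2‖₊ : ENNReal) ^ 2)
          (((volume : Measure ℝ).prod volume).restrict (Set.Icc 0 1 ×ˢ Set.Icc 0 1)) :=
        essSup_sq_le _ _
    _ ≤ linfSqNorm 1 f * linfSqNorm 1 g := essSup_le_of_ae_le _ haeres
end
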